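/- For r, s in the field k, the maps Σ^r = Ψ_{t/(1−rt)} on a quasi-shuffle algebra satisfy Σ^r ∘ Σ^s = Σ^{r+s}; in particular each Σ^r is invertible with inverse Σ^{−r}. -/

import Mathlib

/-!
Quasi-shuffle algebras (Hoffman–Ihara).  We model the span `kA` of the alphabet
(with its commutative associative product `⋄`, written `*` in `L`) as a
non-unital commutative `k`-algebra `L`, and the word algebra `k⟨A⟩` as the
tensor algebra `TensorAlgebra k L`, in which a word `a₁⋯aₙ` is the product
`ι a₁ * ⋯ * ι aₙ`.
-/

open TensorAlgebra

variable (k : Type*) [Field k]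
variable {L : Type*} [NonUnitalCommRing L] [Module k L]
  [SMulCommClass k L L] [IsScalarTower k L L]

/-- The word `a₁⋯aₙ` as an element of the tensor algebra. -/
def word (l : List L) : TensorAlgebra k L := (l.map fun a => TensorAlgebra.ι k a).prod

/-- The `⋄`-product of the letters of a nonempty block (junk value `0` on `[]`). -/
def blockProd : List L → L
  | [] => 0
  | a :: t => t.foldl (· * ·) a

/-- The Hoffman–Ihara operator `Ψ_f` on words, for `f = c₁t + c₂t² + ⋯`:
`Ψ_f(w) = Σ_{(i₁,…,i_m) composition of ℓ(w)} c_{i₁}⋯c_{i_m} I[w]`,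
written via the recursion on the first block. -/
def psi (c : ℕ → k) : List L → TensorAlgebra k L
  | [] => 1
  | a :: w => ∑ j ∈ Finset.range (w.length + 1),
      c (j + 1) • (TensorAlgebra.ι k (blockProd (a :: w.take j)) * psi c (w.drop j))
  termination_by l => l.length
  decreasing_by simp [List.length_drop] <;> omega

/-!
`Σ^x` obeys the recursion `Σ^x(a b v) = a · Σ^x(b v) + x Σ^x((a ⋄ b) v)`, which by
linearity gives `Σ^x(a c z) = a · Σ^x(c z) + x Σ^x((a ⋄ c) z)` for every element `z` of the
word algebra.
Feeding the recursion for `Σ^y` into `Σ^x`, and noting that replacing the first letter `b` by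
`a ⋄ b` commutes with `Σ^y`, shows that `Σ^x ∘ Σ^y` obeys the recursion with `x + y`,
so it is `Σ^{x+y}`. Since `Σ^0` is the identity, `Σ^{-r}` inverts `Σ^r`.
-/

/-- `Σ^x = Ψ_{t/(1-xt)}`. -/
noncomputable abbrev geomPsi (x : k) : List L → TensorAlgebra k L :=
  psi k (fun n => x ^ (n - 1))

section word

omit [SMulCommClass k L L] [IsScalarTower k L L]

lemma word_cons (a : L) (l : List L) : word k (a :: l) = ι k a * word k l := by
  simp [word]

lemma word_singleton (a : L) : word k [a] = ι k a := by
  simp [word]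

lemma word_append (l₁ l₂ : List L) : word k (l₁ ++ l₂) = word k l₁ * word k l₂ := by
  simp [word]

lemma blockProd_mul_cons (a b : L) (l : List L) :
    blockProd (a * b :: l) = a * blockProd (b :: l) :=
  List.foldl_assoc

lemma span_range_word :
    Submodule.span k (Set.range (word k : List L → TensorAlgebra k L)) = ⊤ := by
  set S := Submodule.span k (Set.range (word k : List L → TensorAlgebra k L))
  have hmul : S * S ≤ S := by
    rw [Submodule.span_mul_span, Submodule.span_le]
    rintro _ ⟨_, ⟨u, rfl⟩, _, ⟨v, rfl⟩, rfl⟩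
    exact Submodule.subset_span ⟨u ++ v, word_append k u v⟩
  rw [eq_top_iff]
  rintro z -
  induction z using TensorAlgebra.induction with
  | algebraMap c =>
    rw [Algebra.algebraMap_eq_smul_one]
    exact S.smul_mem c (Submodule.subset_span ⟨[], rfl⟩)
  | ι a => exact Submodule.subset_span ⟨[a], word_singleton k a⟩
  | mul a b ha hb => exact hmul (Submodule.mul_mem_mul ha hb)
  | add a b ha hb => exact S.add_mem ha hb

lemma linearMap_ext_word {f g : TensorAlgebra k L →ₗ[k] TensorAlgebra k L}
    (h : ∀ w : List L, f (word k w) = g (word k w)) : f = g :=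
  LinearMap.ext_on (span_range_word k) (by rintro _ ⟨w, rfl⟩; exact h w)

end word

section geomPsi

omit [SMulCommClass k L L] [IsScalarTower k L L]

variable (x : k)

lemma geomPsi_nil : geomPsi k x ([] : List L) = 1 := by
  rw [geomPsi, psi]

lemma geomPsi_cons (a : L) (w : List L) :
    geomPsi k x (a :: w) = ∑ j ∈ Finset.range (w.length + 1),
      x ^ j • (ι k (blockProd (a :: w.take j)) * geomPsi k x (w.drop j)) := by
  rw [geomPsi, psi]
  simp only [Nat.add_sub_cancel]

lemma geomPsi_singleton (a : L) : geomPsi k x [a] = ι k a := by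
  simp [geomPsi_cons, geomPsi_nil, blockProd]

lemma geomPsi_cons_cons (a b : L) (v : List L) :
    geomPsi k x (a :: b :: v) = ι k a * geomPsi k x (b :: v) + x • geomPsi k x (a * b :: v) := by
  rw [geomPsi_cons, Finset.sum_range_succ', add_comm, geomPsi_cons k x (a * b), Finset.smul_sum]
  congr 1
  · simp [blockProd]
  · refine Finset.sum_congr rfl fun j _ => ?_
    rw [smul_smul, pow_succ', List.take_succ_cons, List.drop_succ_cons]
    rfl

lemma geomPsi_zero : ∀ w : List L, geomPsi k 0 w = word k w
  | [] => geomPsi_nil k 0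
  | [a] => by rw [geomPsi_singleton, word_singleton]
  | a :: b :: v => by
    rw [geomPsi_cons_cons, zero_smul, add_zero, geomPsi_zero (b :: v), ← word_cons]

variable {x} {F : TensorAlgebra k L →ₗ[k] TensorAlgebra k L}
  (hF : ∀ w : List L, F (word k w) = geomPsi k x w)
include hF

lemma map_ι_mul_ι_mul (a c : L) (z : TensorAlgebra k L) :
    F (ι k a * (ι k c * z)) = ι k a * F (ι k c * z) + x • F (ι k (a * c) * z) := by
  suffices h : F ∘ₗ LinearMap.mulLeft k (ι k a * ι k c) =
      LinearMap.mulLeft k (ι k a) ∘ₗ F ∘ₗ LinearMap.mulLeft k (ι k c) +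
        x • F ∘ₗ LinearMap.mulLeft k (ι k (a * c)) by
    simpa [mul_assoc] using LinearMap.congr_fun h z
  refine linearMap_ext_word k fun w => ?_
  simp only [LinearMap.add_apply, LinearMap.smul_apply, LinearMap.comp_apply,
    LinearMap.mulLeft_apply, mul_assoc, ← word_cons, hF]
  exact geomPsi_cons_cons k x a c w

lemma map_ι_mul_geomPsi_cons (y : k) (a b : L) (v : List L) :
    F (ι k a * geomPsi k y (b :: v)) =
      ι k a * F (geomPsi k y (b :: v)) + x • F (geomPsi k y (a * b :: v)) := by
  simp only [geomPsi_cons, blockProd_mul_cons, Finset.mul_sum, map_sum, Finset.smul_sum,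
    ← Finset.sum_add_distrib, mul_smul_comm, map_smul]
  refine Finset.sum_congr rfl fun j _ => ?_
  rw [map_ι_mul_ι_mul k hF, smul_add, smul_comm x]

lemma map_geomPsi (y : k) : ∀ u : List L, F (geomPsi k y u) = geomPsi k (x + y) u
  | [] => by rw [geomPsi_nil, geomPsi_nil]; exact (hF []).trans (geomPsi_nil k x)
  | [a] => by simpa only [word_singleton, geomPsi_singleton] using hF [a]
  | a :: b :: v => by
    rw [geomPsi_cons_cons, map_add, map_smul, map_ι_mul_geomPsi_cons k hF,
      map_geomPsi y (b :: v), map_geomPsi y (a * b :: v), geomPsi_cons_cons, add_assoc,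
      ← add_smul]
termination_by u => u.length

end geomPsi

/--
For `r, s ∈ k`, the maps `Σ^r = Ψ_{t/(1−rt)}` (with coefficients
`r^{n-1}`) satisfy `Σ^r ∘ Σ^s = Σ^{r+s}`; in particular each `Σ^r` is
invertible with inverse `Σ^{−r}`.
-/
theorem stmt6 (r s : k)
    (F G H N : TensorAlgebra k L →ₗ[k] TensorAlgebra k L)
    (hF : ∀ w : List L, F (word k w) = psi k (fun n => r ^ (n - 1)) w)
    (hG : ∀ w : List L, G (word k w) = psi k (fun n => s ^ (n - 1)) w)
    (hH : ∀ w : List L, H (word k w) = psi k (fun n => (r + s) ^ (n - 1)) w)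
    (hN : ∀ w : List L, N (word k w) = psi k (fun n => (-r) ^ (n - 1)) w) :
    (∀ x, F (G x) = H x) ∧ (∀ x, F (N x) = x) ∧ (∀ x, N (F x) = x) := by
  have hFG : F ∘ₗ G = H := linearMap_ext_word k fun w => by
    rw [LinearMap.comp_apply, hG, map_geomPsi k hF, hH]
  have hFN : F ∘ₗ N = LinearMap.id := linearMap_ext_word k fun w => by
    rw [LinearMap.comp_apply, hN, map_geomPsi k hF, add_neg_cancel, geomPsi_zero,
      LinearMap.id_apply]
  have hNF : N ∘ₗ F = LinearMap.id := linearMap_ext_word k fun w => by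
    rw [LinearMap.comp_apply, hF, map_geomPsi k hN, neg_add_cancel, geomPsi_zero,
      LinearMap.id_apply]
  exact ⟨LinearMap.congr_fun hFG, LinearMap.congr_fun hFN, LinearMap.congr_fun hNF⟩
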